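/- arXiv:1605.04123 — 2 statements merged into one kernel-verified Lean document; each statement's English description precedes it below -/
import Mathlib

section
/- Let 0 < σ₀ ≤ σ₁, let σ : ℝ → ℝ be measurable with σ₀ ≤ σ(x) ≤ σ₁ for almost every x ∈ (0,1), let f ∈ L²(0,1), and define v(x) = ∫_x^1 (1/σ(t)) (∫_0^t f(s) ds) dt. Then for every Lipschitz function w : ℝ → ℝ with w(1) = 0, one has ∫_0^1 σ(x) v'(x) w'(x) dx = ∫_0^1 f(x) w(x) dx, where v' and w' denote the almost-everywhere defined derivatives of v and w. -/
/-!
Write `F x = ∫₀ˣ f`. By the Lebesgue differentiation theorem `v' = -F / σ` almost everywhere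
on `(0,1)`, so `σ v' w' = -F w'` there. Both `F` and the Lipschitz `w` are absolutely continuous,
and integrating by parts with `F 0 = 0 = w 1` and `F' = f` a.e. turns `∫₀¹ -F w'` into `∫₀¹ f w`.
-/

open MeasureTheory intervalIntegral Set
open scoped Interval

variable {E : Type*} [NormedAddCommGroup E]

theorem MeasureTheory.MemLp.intervalIntegrable {f : ℝ → E} {p : ENNReal} {a b : ℝ} (hab : a ≤ b)
    (hp : 1 ≤ p) (hf : MemLp f p (volume.restrict (Ioo a b))) :
    IntervalIntegrable f volume a b := by
  have : IsFiniteMeasure (volume.restrict (Ioo a b)) := isFiniteMeasure_restrict.2 (by simp)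
  rw [intervalIntegrable_iff_integrableOn_Ioc_of_le hab, integrableOn_Ioc_iff_integrableOn_Ioo]
  exact hf.integrable hp

theorem intervalIntegrable_one_div_of_ae_le {σ : ℝ → ℝ} {a b c : ℝ} (hσ : Measurable σ)
    (hc : 0 < c) (hσc : ∀ᵐ x, x ∈ Ι a b → c ≤ σ x) :
    IntervalIntegrable (fun x => 1 / σ x) volume a b := by
  rw [intervalIntegrable_iff]
  refine Measure.integrableOn_of_bounded (M := 1 / c) (by simp)
    (measurable_const.div hσ).aestronglyMeasurable ?_
  filter_upwards [(ae_restrict_iff' measurableSet_uIoc).2 hσc] with x hx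
  rw [Real.norm_eq_abs, abs_of_pos (by have := hc.trans_le hx; positivity)]
  exact one_div_le_one_div_of_le hc hx

theorem IntervalIntegrable.ae_hasDerivAt_integral_lower [NormedSpace ℝ E] [CompleteSpace E]
    {g : ℝ → E} {a b : ℝ} (hg : IntervalIntegrable g volume a b) :
    ∀ᵐ x, x ∈ uIcc a b → HasDerivAt (fun x => ∫ t in x..b, g t) (-g x) x := by
  filter_upwards [hg.ae_hasDerivAt_integral] with x hx hxab
  simpa only [← integral_symm] using (hx hxab b right_mem_uIcc).fun_neg

theorem AbsolutelyContinuousOnInterval.integral_primitive_mul_deriv {f w : ℝ → ℝ} {a b : ℝ}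
    (hf : IntervalIntegrable f volume a b) (hw : AbsolutelyContinuousOnInterval w a b)
    (hwb : w b = 0) :
    ∫ x in a..b, (∫ t in a..x, f t) * deriv w x = -∫ x in a..b, f x * w x := by
  have hF := hf.absolutelyContinuousOnInterval_intervalIntegral left_mem_uIcc
  rw [hF.integral_mul_deriv_eq_deriv_mul hw, hwb, integral_same, mul_zero, zero_mul, sub_zero,
    zero_sub]
  congr 1
  refine integral_congr_ae ?_
  filter_upwards [hf.ae_hasDerivAt_integral] with x hx hxab
  rw [(hx (uIoc_subset_uIcc hxab) a left_mem_uIcc).deriv]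

theorem explicit_solution_is_variational_general
    (σ₀ σ₁ : ℝ) (hσ₀ : 0 < σ₀)
    (σ : ℝ → ℝ) (hσm : Measurable σ)
    (hσb : ∀ᵐ x ∂volume, x ∈ Set.Ioo (0:ℝ) 1 → σ₀ ≤ σ x ∧ σ x ≤ σ₁)
    (f : ℝ → ℝ) (hf : MemLp f 2 (volume.restrict (Set.Ioo (0:ℝ) 1)))
    (v : ℝ → ℝ)
    (hv : v = fun x => ∫ t in x..(1:ℝ), (1 / σ t) * ∫ s in (0:ℝ)..t, f s)
    (w : ℝ → ℝ) (hw : ∃ K : NNReal, LipschitzWith K w) (hw1 : w 1 = 0) :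
    (∫ x in (0:ℝ)..1, σ x * deriv v x * deriv w x) = ∫ x in (0:ℝ)..1, f x * w x := by
  obtain ⟨K, hK⟩ := hw
  set F : ℝ → ℝ := fun t => ∫ s in (0:ℝ)..t, f s
  have hf_int : IntervalIntegrable f volume 0 1 := hf.intervalIntegrable zero_le_one one_le_two
  have hF : ContinuousOn F (uIcc 0 1) :=
    (hf_int.absolutelyContinuousOnInterval_intervalIntegral left_mem_uIcc).continuousOn
  have hσ_lower : ∀ᵐ x, x ∈ Ι (0:ℝ) 1 → σ₀ ≤ σ x := by
    rw [uIoc_of_le zero_le_one, ← ae_restrict_iff' measurableSet_Ioc,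
      ← Measure.restrict_congr_set Ioo_ae_eq_Ioc, ae_restrict_iff' measurableSet_Ioo]
    filter_upwards [hσb] with x hx hx01 using (hx hx01).1
  have hv_deriv : ∀ᵐ x, x ∈ Ι (0:ℝ) 1 → HasDerivAt v (-(1 / σ x * F x)) x := by
    filter_upwards [((intervalIntegrable_one_div_of_ae_le hσm hσ₀ hσ_lower).mul_continuousOn
      hF).ae_hasDerivAt_integral_lower] with x hx hx01
    exact hv ▸ hx (uIoc_subset_uIcc hx01)
  calc ∫ x in (0:ℝ)..1, σ x * deriv v x * deriv w x
      = ∫ x in (0:ℝ)..1, -(F x * deriv w x) := by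
        refine integral_congr_ae ?_
        filter_upwards [hσ_lower, hv_deriv] with x hσx hvx hx01
        have := (hσ₀.trans_le (hσx hx01)).ne'
        rw [(hvx hx01).deriv]
        field_simp
    _ = ∫ x in (0:ℝ)..1, f x * w x := by
        rw [intervalIntegral.integral_neg, hK.lipschitzOnWith.absolutelyContinuousOnInterval
          |>.integral_primitive_mul_deriv hf_int hw1, neg_neg]

/-- The explicit function `v(x) = ∫_x^1 (1/σ(t)) (∫_0^t f(s) ds) dt` is the variational
solution of the mixed boundary value problem: for every Lipschitz `w` with `w(1) = 0`,
`∫_0^1 σ v' w' dx = ∫_0^1 f w dx`. -/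
theorem explicit_solution_is_variational
    (σ₀ σ₁ : ℝ) (hσ₀ : 0 < σ₀) (hσ₀₁ : σ₀ ≤ σ₁)
    (σ : ℝ → ℝ) (hσm : Measurable σ)
    (hσb : ∀ᵐ x ∂volume, x ∈ Set.Ioo (0:ℝ) 1 → σ₀ ≤ σ x ∧ σ x ≤ σ₁)
    (f : ℝ → ℝ) (hfm : Measurable f) (hf : MemLp f 2 (volume.restrict (Set.Ioo (0:ℝ) 1)))
    (v : ℝ → ℝ)
    (hv : v = fun x => ∫ t in x..(1:ℝ), (1 / σ t) * ∫ s in (0:ℝ)..t, f s)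
    (w : ℝ → ℝ) (hw : ∃ K : NNReal, LipschitzWith K w) (hw1 : w 1 = 0) :
    (∫ x in (0:ℝ)..1, σ x * deriv v x * deriv w x) = ∫ x in (0:ℝ)..1, f x * w x :=
  explicit_solution_is_variational_general σ₀ σ₁ hσ₀ σ hσm hσb f hf v hv w hw hw1
end

section
/- Let m : ℝ → ℝ be measurable and essentially bounded on (0,1). Then the supremum of the quantities ∫_0^1 |m(x) ∫_0^x f(t) dt| dx, taken over all f : ℝ → ℝ integrable on (0,1) satisfying ∫_0^1 |∫_0^x f(t) dt| dx ≤ 1, equals the essential supremum of |m| over (0,1). -/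
/-!
The bound `∫ |m F| ≤ ‖m‖_∞ ∫ |F|` is Hölder's inequality with exponents `∞` and `1`, once one knows
that the primitive `F` of an integrable `f` is continuous, hence integrable, on `[0, 1]`. For the
converse, take `0 ≤ w < c < ‖m‖_∞`: the set `A = {c < |m|} ∩ (0, 1)` has positive measure, so by
Lebesgue's density theorem it fills all but a fraction `η` of small balls around one of its
points `a`. The hat function `F` of height `1 / δ` and integral `1` centred at `a` is the primitive
of an integrable step function, and puts mass at least `1 - η` on `A`, so
`∫ |m F| ≥ c (1 - η) > w`.
-/

open MeasureTheory intervalIntegral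
open Set Filter Topology Metric

lemma intervalIntegral_indicator_Ioc_one {x c d : ℝ} (hx : 0 ≤ x) (hc : 0 ≤ c) (hcd : c ≤ d) :
    ∫ t in (0:ℝ)..x, (Ioc c d).indicator 1 t = min x d - min x c := by
  rw [integral_of_le hx, integral_indicator_one measurableSet_Ioc,
    measureReal_restrict_apply measurableSet_Ioc, Ioc_inter_Ioc, max_eq_left hc,
    Real.volume_real_Ioc]
  simp only [min_def, max_def]
  split_ifs <;> linarith

lemma intervalIntegral_min_const {c : ℝ} (h0 : 0 ≤ c) (h1 : c ≤ 1) :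
    ∫ x in (0:ℝ)..1, min x c = c - c ^ 2 / 2 := by
  have hint : ∀ u v : ℝ, IntervalIntegrable (fun x => min x c) volume u v := fun u v =>
    (continuous_id.min continuous_const).intervalIntegrable u v
  have below : ∫ x in (0:ℝ)..c, min x c = ∫ x in (0:ℝ)..c, x :=
    integral_congr fun x hx => min_eq_left (by rw [uIcc_of_le h0] at hx; exact hx.2)
  have above : ∫ x in c..(1:ℝ), min x c = ∫ x in c..(1:ℝ), c :=
    integral_congr fun x hx => min_eq_right (by rw [uIcc_of_le h1] at hx; exact hx.1)
  rw [← integral_add_adjacent_intervals (hint 0 c) (hint c 1), below, above, integral_id,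
    intervalIntegral.integral_const, smul_eq_mul]
  ring

lemma intervalIntegral_eq_setIntegral_Ioo {a b : ℝ} (hab : a ≤ b) (g : ℝ → ℝ) :
    ∫ x in a..b, g x = ∫ x in Ioo a b, g x := by
  rw [integral_of_le hab, integral_Ioc_eq_integral_Ioo]

/-- `tent a δ x = max 0 (δ - |x - a|) / δ ^ 2`, written as a combination of `min x ·` so that it is
visibly the primitive of `tentDeriv a δ`. -/
noncomputable def tent (a δ x : ℝ) : ℝ := (δ ^ 2)⁻¹ * (2 * min x a - min x (a - δ) - min x (a + δ))

noncomputable def tentDeriv (a δ : ℝ) (t : ℝ) : ℝ :=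
  (δ ^ 2)⁻¹ * ((Ioc (a - δ) a).indicator 1 t - (Ioc a (a + δ)).indicator 1 t)

section Tent

variable {a δ : ℝ}

lemma integrable_tentDeriv : Integrable (tentDeriv a δ) := by
  have hind : ∀ c d : ℝ, Integrable ((Ioc c d).indicator (1 : ℝ → ℝ)) :=
    fun c d => (integrable_indicator_iff measurableSet_Ioc).2 (integrableOn_const (by simp))
  exact ((hind _ _).sub (hind _ _)).const_mul _

lemma integral_tentDeriv (hδ : 0 ≤ δ) (ha : δ ≤ a) {x : ℝ} (hx : 0 ≤ x) :
    ∫ t in (0:ℝ)..x, tentDeriv a δ t = tent a δ x := by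
  have hind : ∀ c d : ℝ, IntervalIntegrable ((Ioc c d).indicator (1 : ℝ → ℝ)) volume 0 x :=
    fun c d => ((integrable_indicator_iff measurableSet_Ioc).2
      (integrableOn_const (by simp))).intervalIntegrable
  unfold tent tentDeriv
  rw [intervalIntegral.integral_const_mul, integral_sub (hind _ _) (hind _ _),
    intervalIntegral_indicator_Ioc_one hx (by linarith) (by linarith),
    intervalIntegral_indicator_Ioc_one hx (by linarith) (by linarith)]
  ring

lemma continuous_tent : Continuous (tent a δ) := by
  unfold tent; fun_prop

lemma tent_nonneg (x : ℝ) (hδ : 0 ≤ δ) : 0 ≤ tent a δ x := by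
  refine mul_nonneg (by positivity) ?_
  simp only [min_def]; split_ifs <;> linarith

lemma tent_le_inv (x : ℝ) (hδ : 0 < δ) : tent a δ x ≤ δ⁻¹ := by
  calc tent a δ x ≤ (δ ^ 2)⁻¹ * δ := by
        refine mul_le_mul_of_nonneg_left ?_ (by positivity)
        simp only [min_def]; split_ifs <;> linarith
    _ = δ⁻¹ := by field_simp

lemma tent_eq_zero_of_notMem {x : ℝ} (hδ : 0 ≤ δ) (hx : x ∉ closedBall a δ) : tent a δ x = 0 := by
  rw [mem_closedBall, Real.dist_eq, abs_le, not_and_or, not_le, not_le] at hx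
  rw [tent, mul_eq_zero]; right
  rcases hx with hx | hx <;> simp only [min_def] <;> split_ifs <;> linarith

lemma integrable_tent (hδ : 0 ≤ δ) : Integrable (tent a δ) :=
  continuous_tent.integrable_of_hasCompactSupport
    (HasCompactSupport.intro (isCompact_closedBall a δ) fun _ => tent_eq_zero_of_notMem hδ)

lemma integral_tent (hδ : 0 < δ) (ha : δ ≤ a) (ha' : a + δ ≤ 1) :
    ∫ x in (0:ℝ)..1, tent a δ x = 1 := by
  have hint : ∀ c, IntervalIntegrable (fun x => min x c) volume 0 1 := fun c =>
    (continuous_id.min continuous_const).intervalIntegrable 0 1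
  unfold tent
  rw [intervalIntegral.integral_const_mul,
    integral_sub (((hint a).const_mul 2).sub (hint _)) (hint _),
    integral_sub ((hint a).const_mul 2) (hint _), intervalIntegral.integral_const_mul,
    intervalIntegral_min_const (by linarith) (by linarith),
    intervalIntegral_min_const (by linarith) (by linarith),
    intervalIntegral_min_const (by linarith) (by linarith)]
  field_simp
  ring

lemma setIntegral_tent_le (hδ : 0 < δ) {s : Set ℝ} (hs : MeasurableSet s) :
    ∫ x in s, tent a δ x ≤ δ⁻¹ * volume.real (closedBall a δ ∩ s) := by
  rw [setIntegral_eq_of_subset_of_forall_sdiff_eq_zero hs inter_subset_right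
    fun x hx => tent_eq_zero_of_notMem hδ.le fun hxB => hx.2 ⟨hxB, hx.1⟩]
  refine (Real.le_norm_self _).trans (norm_setIntegral_le_of_norm_le_const
    (measure_inter_lt_top_of_left_ne_top measure_closedBall_lt_top.ne) fun x _ => ?_)
  rw [Real.norm_eq_abs, abs_of_nonneg (tent_nonneg x hδ.le)]
  exact tent_le_inv x hδ

lemma one_sub_le_setIntegral_tent {A : Set ℝ} (hA : MeasurableSet A) (hA01 : A ⊆ Ioo 0 1)
    {η : ℝ} (hδ : 0 < δ) (ha : δ ≤ a) (ha' : a + δ ≤ 1)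
    (hAδ : volume.real (closedBall a δ \ A) ≤ η * δ) :
    1 - η ≤ ∫ x in A, tent a δ x := by
  have houtside : ∫ x in Ioo 0 1 \ A, tent a δ x ≤ η :=
    calc ∫ x in Ioo 0 1 \ A, tent a δ x
        ≤ δ⁻¹ * volume.real (closedBall a δ ∩ (Ioo 0 1 \ A)) :=
          setIntegral_tent_le hδ (measurableSet_Ioo.diff hA)
      _ ≤ δ⁻¹ * volume.real (closedBall a δ \ A) := by
          gcongr
          · exact measure_ne_top_of_subset sdiff_subset measure_closedBall_lt_top.ne
          · exact fun x hx => ⟨hx.1, hx.2.2⟩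
      _ ≤ δ⁻¹ * (η * δ) := by gcongr
      _ = η := by field_simp
  have htotal : ∫ x in Ioo 0 1, tent a δ x = 1 := by
    rw [← intervalIntegral_eq_setIntegral_Ioo zero_le_one, integral_tent hδ ha ha']
  rw [setIntegral_sdiff hA (integrable_tent hδ.le).integrableOn hA01, htotal] at houtside
  linarith

lemma intervalIntegral_abs_mul_primitive_tentDeriv (hδ : 0 ≤ δ) (ha : δ ≤ a) (g : ℝ → ℝ) :
    ∫ x in (0:ℝ)..1, |g x * ∫ t in (0:ℝ)..x, tentDeriv a δ t| =
      ∫ x in Ioo 0 1, |g x| * tent a δ x := by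
  rw [← intervalIntegral_eq_setIntegral_Ioo zero_le_one]
  refine integral_congr fun x hx => ?_
  rw [uIcc_of_le zero_le_one] at hx
  rw [integral_tentDeriv hδ ha hx.1, abs_mul, abs_of_nonneg (tent_nonneg x hδ)]

lemma intervalIntegral_abs_primitive_tentDeriv (hδ : 0 < δ) (ha : δ ≤ a) (ha' : a + δ ≤ 1) :
    ∫ x in (0:ℝ)..1, |∫ t in (0:ℝ)..x, tentDeriv a δ t| = 1 := by
  refine Eq.trans (integral_congr fun x hx => ?_) (integral_tent hδ ha ha')
  rw [uIcc_of_le zero_le_one] at hx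
  rw [integral_tentDeriv hδ.le ha hx.1, abs_of_nonneg (tent_nonneg x hδ.le)]

end Tent

lemma Real.exists_mem_eventually_measureReal_closedBall_diff_le {A : Set ℝ} (hA : MeasurableSet A)
    (h : volume A ≠ 0) :
    ∃ a ∈ A, ∀ η > 0, ∀ᶠ δ in 𝓝[>] 0, volume.real (closedBall a δ \ A) ≤ η * δ := by
  have : (ae (volume.restrict A)).NeBot := ae_restrict_neBot.2 h
  obtain ⟨a, hdensity, haA⟩ :=
    ((Besicovitch.ae_tendsto_measure_inter_div volume A).and (ae_restrict_mem hA)).exists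
  refine ⟨a, haA, fun η hη => ?_⟩
  have hratio : Tendsto (fun r => volume.real (A ∩ closedBall a r) / volume.real (closedBall a r))
      (𝓝[>] 0) (𝓝 1) := by
    simpa only [Function.comp_def, ENNReal.toReal_div, measureReal_def, ENNReal.toReal_one] using
      (ENNReal.tendsto_toReal ENNReal.one_ne_top).comp hdensity
  filter_upwards [hratio.eventually (eventually_gt_nhds (show 1 - η / 2 < 1 by linarith)),
    self_mem_nhdsWithin] with δ hδ (hδ0 : 0 < δ)
  rw [Real.volume_real_closedBall hδ0.le, lt_div_iff₀ (by positivity), inter_comm] at hδ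
  have hsplit := measureReal_inter_add_sdiff (s := closedBall a δ) hA
    (measure_closedBall_lt_top (μ := volume)).ne
  rw [Real.volume_real_closedBall hδ0.le] at hsplit
  linarith

lemma integral_abs_mul_le_mul_integral {α : Type*} [MeasurableSpace α] {μ : Measure α}
    {m g : α → ℝ} {M : ℝ} (hM : ∀ᵐ x ∂μ, |m x| ≤ M) (hg : Integrable g μ) :
    ∫ x, |m x * g x| ∂μ ≤ M * ∫ x, |g x| ∂μ := by
  rw [← MeasureTheory.integral_const_mul]
  refine integral_mono_of_nonneg (ae_of_all _ fun x => abs_nonneg _) (hg.abs.const_mul M) ?_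
  filter_upwards [hM] with x hx
  rw [abs_mul]
  exact mul_le_mul_of_nonneg_right hx (abs_nonneg _)

lemma intervalIntegrable_primitive {f : ℝ → ℝ} {a b : ℝ} (hf : IntervalIntegrable f volume a b) :
    IntervalIntegrable (fun x => ∫ t in a..x, f t) volume a b :=
  (continuousOn_primitive_interval' hf left_mem_uIcc).intervalIntegrable

lemma integral_abs_mul_primitive_le {m f : ℝ → ℝ} {M : ℝ}
    (hM : ∀ᵐ x ∂volume.restrict (Ioo (0:ℝ) 1), |m x| ≤ M) (hf : IntegrableOn f (Ioo 0 1)) :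
    ∫ x in (0:ℝ)..1, |m x * ∫ t in (0:ℝ)..x, f t| ≤
      M * ∫ x in (0:ℝ)..1, |∫ t in (0:ℝ)..x, f t| := by
  have hF := intervalIntegrable_primitive
    ((intervalIntegrable_iff_integrableOn_Ioo_of_le zero_le_one).2 hf)
  simp only [intervalIntegral_eq_setIntegral_Ioo zero_le_one]
  exact integral_abs_mul_le_mul_integral hM
    ((intervalIntegrable_iff_integrableOn_Ioo_of_le zero_le_one).1 hF)

lemma exists_lt_integral_abs_mul_primitive {m : ℝ → ℝ} (hm : Measurable m) {C c w : ℝ}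
    (hC : ∀ᵐ x ∂volume.restrict (Ioo (0:ℝ) 1), |m x| ≤ C)
    (hc : ∃ᵐ x ∂volume.restrict (Ioo (0:ℝ) 1), c < |m x|) (hw : w < c) :
    ∃ f : ℝ → ℝ, IntegrableOn f (Ioo 0 1) ∧ (∫ x in (0:ℝ)..1, |∫ t in (0:ℝ)..x, f t|) ≤ 1 ∧
      w < ∫ x in (0:ℝ)..1, |m x * ∫ t in (0:ℝ)..x, f t| := by
  rcases lt_or_ge w 0 with hw0 | hw0
  · exact ⟨0, integrableOn_zero, by simp, by simpa⟩
  have hmc : MeasurableSet {x | c < |m x|} := measurableSet_lt measurable_const hm.abs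
  set A := {x | c < |m x|} ∩ Ioo (0:ℝ) 1
  have hA : MeasurableSet A := hmc.inter measurableSet_Ioo
  rw [frequently_ae_iff, Measure.restrict_apply hmc] at hc
  obtain ⟨a, ⟨-, ha⟩, hdensity⟩ := Real.exists_mem_eventually_measureReal_closedBall_diff_le hA hc
  obtain ⟨η, hη, hwη⟩ : ∃ η > 0, w < c * (1 - η) := by
    refine ⟨(c - w) / (2 * c), div_pos (by linarith) (by linarith), ?_⟩
    have hc0 : c ≠ 0 := by linarith
    have : c * (1 - (c - w) / (2 * c)) = (c + w) / 2 := by field_simp; ring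
    linarith
  obtain ⟨δ, hδA, hδ, hδlt⟩ := ((hdensity η hη).and
    (Ioo_mem_nhdsGT (lt_min ha.1 (sub_pos.2 ha.2)))).exists
  have hδa : δ ≤ a := (lt_min_iff.1 hδlt).1.le
  have haδ : a + δ ≤ 1 := by linarith [(lt_min_iff.1 hδlt).2]
  have hint : IntegrableOn (fun x => |m x| * tent a δ x) (Ioo 0 1) :=
    (integrable_tent hδ.le).integrableOn.bdd_mul hm.abs.aestronglyMeasurable (by simpa using hC)
  refine ⟨tentDeriv a δ, integrable_tentDeriv.integrableOn,
    (intervalIntegral_abs_primitive_tentDeriv hδ hδa haδ).le, ?_⟩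
  calc w < c * (1 - η) := hwη
    _ ≤ c * ∫ x in A, tent a δ x := mul_le_mul_of_nonneg_left
        (one_sub_le_setIntegral_tent hA inter_subset_right hδ hδa haδ hδA) (by linarith)
    _ = ∫ x in A, c * tent a δ x := (MeasureTheory.integral_const_mul _ _).symm
    _ ≤ ∫ x in A, |m x| * tent a δ x :=
        setIntegral_mono_on ((integrable_tent hδ.le).integrableOn.const_mul c)
          (hint.mono_set inter_subset_right) hA
          fun x hx => mul_le_mul_of_nonneg_right hx.1.le (tent_nonneg x hδ.le)
    _ ≤ ∫ x in Ioo 0 1, |m x| * tent a δ x :=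
        setIntegral_mono_set hint (ae_of_all _ fun x => mul_nonneg (abs_nonneg _)
          (tent_nonneg x hδ.le)) inter_subset_right.eventuallyLE
    _ = _ := (intervalIntegral_abs_mul_primitive_tentDeriv hδ.le hδa m).symm

/-- Lemma 6.1: the norm of the operator `T_m f(x) = m(x) ∫_0^x f(t) dt` from
`W^{−1,1}(0,1)` to `L¹(0,1)` equals `‖m‖_{L^∞(0,1)}`: the supremum of
`∫_0^1 |m(x) ∫_0^x f| dx` over integrable `f` with `∫_0^1 |∫_0^x f| dx ≤ 1` is
`esssup_{(0,1)} |m|`. -/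
theorem multiplier_operator_norm_eq
    (m : ℝ → ℝ) (hm : Measurable m)
    (hmb : ∃ C : ℝ, ∀ᵐ x ∂volume.restrict (Set.Ioo (0:ℝ) 1), |m x| ≤ C) :
    sSup {r : ℝ | ∃ f : ℝ → ℝ, IntegrableOn f (Set.Ioo (0:ℝ) 1) volume ∧
        (∫ x in (0:ℝ)..1, |∫ t in (0:ℝ)..x, f t|) ≤ 1 ∧
        r = ∫ x in (0:ℝ)..1, |m x * ∫ t in (0:ℝ)..x, f t|} =
      essSup (fun x => |m x|) (volume.restrict (Set.Ioo (0:ℝ) 1)) := by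
  obtain ⟨C, hC⟩ := hmb
  have : (ae (volume.restrict (Ioo (0:ℝ) 1))).NeBot := ae_restrict_neBot.2 (by simp)
  have hM : ∀ᵐ x ∂volume.restrict (Ioo (0:ℝ) 1), |m x| ≤ essSup (fun x => |m x|) _ :=
    ae_le_essSup ⟨C, hC⟩
  have hM0 : 0 ≤ essSup (fun x => |m x|) (volume.restrict (Ioo (0:ℝ) 1)) :=
    hM.exists.elim fun x hx => (abs_nonneg _).trans hx
  refine csSup_eq_of_forall_le_of_forall_lt_exists_gt ⟨0, 0, integrableOn_zero, by simp, by simp⟩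
    ?_ fun w hw => ?_
  · rintro _ ⟨f, hf, hF, rfl⟩
    exact (integral_abs_mul_primitive_le hM hf).trans (mul_le_of_le_one_right hM0 hF)
  · obtain ⟨c, hwc, hcM⟩ := exists_between hw
    obtain ⟨f, hf, hF, hlt⟩ := exists_lt_integral_abs_mul_primitive hm hC
      (frequently_lt_of_lt_limsup (isCoboundedUnder_le_of_le _ fun x => abs_nonneg (m x)) hcM) hwc
    exact ⟨_, ⟨f, hf, hF, rfl⟩, hlt⟩
end
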